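/- Among all prefix-closed subtrees of size N of a rooted candidate lattice with multiplicative path scores, the maximal achievable score sum, as a function of N, is concave: its increments over N are non-increasing. -/

import Mathlib

/-!
Exchange argument. Take optimal prefix-closed sets `A` of size `N` and `C` of size `N + 2`, and a
deepest node `x` of `C \ A`. No child of `x` lies in `C`, so `C.erase x` is prefix-closed of
size `N + 1`. Walking up from `x` we stay in `C` and must enter `A` (it contains the root); the
last node `y` before entering has its parent in `A`, so `insert y A` is prefix-closed of size
`N + 1`, and scores only grow along the way, so `score x ≤ score y`. Hence
`A*(N+2) - score x ≤ A*(N+1)` and `A*(N) + score x ≤ A*(N+1)`.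
-/

/-- A candidate lattice: a rooted tree with multiplicative path scores, where each
node multiplies its parent's score by a weight in [0,1], and the root has score 1. -/
structure ScoreTree (σ : Type) where
  root : σ
  parent : σ → σ
  depth : σ → ℕ
  weight : σ → ℝ
  score : σ → ℝ
  parent_root : parent root = root
  depth_root : depth root = 0
  depth_node : ∀ i, i ≠ root → depth i = depth (parent i) + 1
  weight_nonneg : ∀ i, 0 ≤ weight i
  weight_le_one : ∀ i, weight i ≤ 1
  score_root : score root = 1
  score_node : ∀ i, i ≠ root → score i = score (parent i) * weight i

open Finset

namespace ScoreTree

variable {σ : Type} (T : ScoreTree σ)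

theorem depth_parent_lt {i : σ} (hi : i ≠ T.root) : T.depth (T.parent i) < T.depth i := by
  rw [T.depth_node i hi]
  exact Nat.lt_succ_self _

@[elab_as_elim]
theorem parent_induction {P : σ → Prop} (root : P T.root)
    (step : ∀ i, i ≠ T.root → P (T.parent i) → P i) (i : σ) : P i := by
  induction hd : T.depth i using Nat.strong_induction_on generalizing i with
  | _ n ih =>
    by_cases hi : i = T.root
    · exact hi ▸ root
    · exact step i hi (ih _ (hd ▸ T.depth_parent_lt hi) _ rfl)

theorem score_nonneg (i : σ) : 0 ≤ T.score i := by
  induction i using T.parent_induction with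
  | root => rw [T.score_root]; exact zero_le_one
  | step i hi ih => rw [T.score_node i hi]; exact mul_nonneg ih (T.weight_nonneg i)

theorem score_le_score_parent (i : σ) : T.score i ≤ T.score (T.parent i) := by
  by_cases hi : i = T.root
  · rw [hi, T.parent_root]
  · rw [T.score_node i hi]
    exact mul_le_of_le_one_right (T.score_nonneg _) (T.weight_le_one i)

theorem exists_mem_sdiff_parent_mem_score_le [DecidableEq σ] {A C : Finset σ} (hA : T.root ∈ A)
    (hC : ∀ i ∈ C, T.parent i ∈ C) {x : σ} (hx : x ∈ C \ A) :
    ∃ y ∈ C \ A, T.parent y ∈ A ∧ T.score x ≤ T.score y := by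
  induction x using T.parent_induction with
  | root => exact absurd hA (mem_sdiff.1 hx).2
  | step i _ ih =>
    by_cases hp : T.parent i ∈ A
    · exact ⟨i, hx, hp, le_rfl⟩
    · obtain ⟨y, hy, hpy, hle⟩ := ih (mem_sdiff.2 ⟨hC i (mem_sdiff.1 hx).1, hp⟩)
      exact ⟨y, hy, hpy, (T.score_le_score_parent i).trans hle⟩

structure IsPrefixClosed (S : Finset σ) : Prop where
  root_mem : T.root ∈ S
  parent_mem : ∀ i ∈ S, T.parent i ∈ S

namespace IsPrefixClosed

variable {T} [DecidableEq σ] {S : Finset σ}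

theorem insert (hS : T.IsPrefixClosed S) {y : σ} (hy : T.parent y ∈ S) :
    T.IsPrefixClosed (insert y S) where
  root_mem := mem_insert_of_mem hS.root_mem
  parent_mem i hi := by
    rcases mem_insert.1 hi with rfl | hi
    · exact mem_insert_of_mem hy
    · exact mem_insert_of_mem (hS.parent_mem i hi)

theorem erase (hS : T.IsPrefixClosed S) {x : σ} (hleaf : ∀ i ∈ S, T.parent i ≠ x) :
    T.IsPrefixClosed (S.erase x) where
  root_mem := mem_erase.2 ⟨T.parent_root ▸ hleaf _ hS.root_mem, hS.root_mem⟩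
  parent_mem i hi :=
    mem_erase.2 ⟨hleaf i (mem_of_mem_erase hi), hS.parent_mem i (mem_of_mem_erase hi)⟩

end IsPrefixClosed

theorem exists_exchange_of_card_lt [DecidableEq σ] {A C : Finset σ} (hA : T.IsPrefixClosed A)
    (hC : T.IsPrefixClosed C) (hAC : #A < #C) :
    ∃ x ∈ C, ∃ y ∉ A, T.IsPrefixClosed (C.erase x) ∧ T.IsPrefixClosed (insert y A) ∧
      T.score x ≤ T.score y := by
  obtain ⟨x, hx, hdeepest⟩ := (C \ A).exists_max_image T.depth
    (sdiff_nonempty.2 fun h => (card_le_card h).not_gt hAC)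
  have hxA : x ∉ A := (mem_sdiff.1 hx).2
  have hleaf : ∀ i ∈ C, T.parent i ≠ x := by
    rintro i hi rfl
    have hir : i ≠ T.root := by
      rintro rfl
      exact hxA (by rw [T.parent_root]; exact hA.root_mem)
    have hiA : i ∉ A := fun h => hxA (hA.parent_mem i h)
    exact (T.depth_parent_lt hir).not_ge (hdeepest i (mem_sdiff.2 ⟨hi, hiA⟩))
  obtain ⟨y, hy, hpy, hxy⟩ := T.exists_mem_sdiff_parent_mem_score_le hA.root_mem hC.parent_mem hx
  exact ⟨x, (mem_sdiff.1 hx).1, y, (mem_sdiff.1 hy).2, hC.erase hleaf, hA.insert hpy, hxy⟩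

end ScoreTree

/-- The maximal achievable score sum over prefix-closed subtrees of size N of a
rooted candidate lattice with multiplicative path scores is a concave function of N:
its increments over N are non-increasing. -/
theorem stmt17 {σ : Type} (T : ScoreTree σ) (Astar : ℕ → ℝ)
    (hAstar : ∀ N, 1 ≤ N →
      IsGreatest {v : ℝ | ∃ S : Finset σ, T.root ∈ S ∧ (∀ i ∈ S, T.parent i ∈ S) ∧
        S.card = N ∧ ∑ i ∈ S, T.score i = v} (Astar N))
    (N : ℕ) (hN : 1 ≤ N) :
    Astar (N + 2) - Astar (N + 1) ≤ Astar (N + 1) - Astar N := by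
  classical
  obtain ⟨A, hrootA, hclA, hcardA, hsumA⟩ := (hAstar N hN).1
  obtain ⟨C, hrootC, hclC, hcardC, hsumC⟩ := (hAstar (N + 2) (by omega)).1
  obtain ⟨x, hxC, y, hyA, hC', hA', hxy⟩ :=
    T.exists_exchange_of_card_lt ⟨hrootA, hclA⟩ ⟨hrootC, hclC⟩ (by omega)
  have hdrop : Astar (N + 2) - T.score x ≤ Astar (N + 1) :=
    (hAstar (N + 1) (by omega)).2 ⟨C.erase x, hC'.root_mem, hC'.parent_mem,
      by rw [card_erase_of_mem hxC, hcardC]; rfl,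
      by rw [← hsumC, ← sum_erase_add C _ hxC, add_sub_cancel_right]⟩
  have hadd : Astar N + T.score y ≤ Astar (N + 1) :=
    (hAstar (N + 1) (by omega)).2 ⟨insert y A, hA'.root_mem, hA'.parent_mem,
      by rw [card_insert_of_notMem hyA, hcardA],
      by rw [sum_insert hyA, hsumA, add_comm]⟩
  linarith
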